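/- Let L > 0, τ, ε, η₁, η₂ ∈ ℝ, M > 0, and let u : ℝ × ℝ² → ℝ be smooth (C^∞) with u(t,·) L-periodic for every t ∈ ℝ. Define μ : ℝ × ℝ² → ℝ by μ = ε²Δₓ(ε²Δₓu − F′(u)) − F″(u)·(ε²Δₓu − F′(u)) + ε²η₁Δₓu − η₂F′(u) (spatial operators applied to u(t,·)), and suppose ∂ₜu(t,x) = M·(Δₓμ)(t,x) for all (t,x). Then for every t₀ ∈ ℝ, the function t ↦ E_FCH(u(t,·)) is differentiable at t₀ with derivative −M·∫_Ω |∇ₓμ(t₀,x)|² dx. -/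

import Mathlib

open MeasureTheory

noncomputable section

/-- The box `Ω = [0,L]²` in `ℝ²` (modeled as `ℝ × ℝ`). -/
def box (L : ℝ) : Set (ℝ × ℝ) := Set.Icc (0 : ℝ) L ×ˢ Set.Icc (0 : ℝ) L

/-- `f : ℝ² → ℝ` is `L`-periodic: periodic with period `L` in each coordinate direction. -/
def IsPeriodic (L : ℝ) (f : ℝ × ℝ → ℝ) : Prop :=
  ∀ x : ℝ × ℝ, f (x.1 + L, x.2) = f x ∧ f (x.1, x.2 + L) = f x

/-- First partial derivative `∂f/∂x₁`. -/
def pd1 (f : ℝ × ℝ → ℝ) (x : ℝ × ℝ) : ℝ := fderiv ℝ f x (1, 0)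

/-- Second partial derivative `∂f/∂x₂`. -/
def pd2 (f : ℝ × ℝ → ℝ) (x : ℝ × ℝ) : ℝ := fderiv ℝ f x (0, 1)

/-- The Laplacian `Δf = ∂²f/∂x₁² + ∂²f/∂x₂²`. -/
def lap (f : ℝ × ℝ → ℝ) (x : ℝ × ℝ) : ℝ := pd1 (pd1 f) x + pd2 (pd2 f) x

/-- The squared gradient `|∇f|² = (∂f/∂x₁)² + (∂f/∂x₂)²`. -/
def gradSq (f : ℝ × ℝ → ℝ) (x : ℝ × ℝ) : ℝ := (pd1 f x) ^ 2 + (pd2 f x) ^ 2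

/-- The double-well potential `F(ζ) = ½(ζ+1)²(½(ζ−1)² + (2/3)τ(ζ−2))`. -/
def F (τ : ℝ) (ζ : ℝ) : ℝ := (1/2) * (ζ + 1) ^ 2 * ((1/2) * (ζ - 1) ^ 2 + (2/3) * τ * (ζ - 2))

/-- The FCH free energy
`E_FCH(u) = ∫_Ω [½(ε²Δu − F′(u))² − (ε²/2)η₁|∇u|² − η₂F(u)] dx`. -/
def EFCH (L τ ε η₁ η₂ : ℝ) (u : ℝ × ℝ → ℝ) : ℝ :=
  ∫ x in box L,
    ((1/2) * (ε ^ 2 * lap u x - deriv (F τ) (u x)) ^ 2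
      - (ε ^ 2 / 2) * η₁ * gradSq u x - η₂ * F τ (u x))


theorem aux_contDiff_dirDeriv {V : Type*} [NormedAddCommGroup V] [NormedSpace ℝ V]
    {f : V → ℝ} (hf : ContDiff ℝ (⊤ : ℕ∞) f) (v : V) :
    ContDiff ℝ (⊤ : ℕ∞) (fun p => fderiv ℝ f p v) :=
  (hf.fderiv_right (by simp)).clm_apply contDiff_const

theorem aux_periodic_fderiv {L : ℝ} {f : ℝ × ℝ → ℝ} (hf : Differentiable ℝ f)
    (hp : IsPeriodic L f) (v : ℝ × ℝ) :
    IsPeriodic L (fun x => fderiv ℝ f x v) := by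
  have key : ∀ c : ℝ × ℝ, (∀ y : ℝ × ℝ, f (y + c) = f y) →
      ∀ x : ℝ × ℝ, fderiv ℝ f (x + c) = fderiv ℝ f x := by
    intro c hc x
    have h1 : HasFDerivAt (fun y : ℝ × ℝ => f (y + c)) (fderiv ℝ f (x + c)) x := by
      have := (hf (x + c)).hasFDerivAt.comp x
        ((hasFDerivAt_id x).add_const c)
      simpa [Function.comp_def] using this
    rw [show (fun y : ℝ × ℝ => f (y + c)) = f from funext hc] at h1
    exact h1.unique (hf x).hasFDerivAt
  intro x
  have e1 : ∀ y : ℝ × ℝ, y + ((L : ℝ), (0 : ℝ)) = (y.1 + L, y.2) := by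
    intro y; simp [Prod.ext_iff]
  have e2 : ∀ y : ℝ × ℝ, y + ((0 : ℝ), (L : ℝ)) = (y.1, y.2 + L) := by
    intro y; simp [Prod.ext_iff]
  constructor
  · have := key (L, 0) (fun y => by rw [e1 y]; exact (hp y).1) x
    rw [e1 x] at this; simp only []; rw [this]
  · have := key (0, L) (fun y => by rw [e2 y]; exact (hp y).2) x
    rw [e2 x] at this; simp only []; rw [this]

theorem periodic_pd1 {L : ℝ} {f : ℝ × ℝ → ℝ} (hf : Differentiable ℝ f)
    (hp : IsPeriodic L f) : IsPeriodic L (pd1 f) := aux_periodic_fderiv hf hp _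
theorem periodic_pd2 {L : ℝ} {f : ℝ × ℝ → ℝ} (hf : Differentiable ℝ f)
    (hp : IsPeriodic L f) : IsPeriodic L (pd2 f) := aux_periodic_fderiv hf hp _
theorem contDiff_pd1 {f : ℝ × ℝ → ℝ} (hf : ContDiff ℝ (⊤ : ℕ∞) f) : ContDiff ℝ (⊤ : ℕ∞) (pd1 f) :=
  aux_contDiff_dirDeriv hf _
theorem contDiff_pd2 {f : ℝ × ℝ → ℝ} (hf : ContDiff ℝ (⊤ : ℕ∞) f) : ContDiff ℝ (⊤ : ℕ∞) (pd2 f) :=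
  aux_contDiff_dirDeriv hf _
theorem periodic_lap {L : ℝ} {f : ℝ × ℝ → ℝ} (hf : ContDiff ℝ (⊤ : ℕ∞) f)
    (hp : IsPeriodic L f) : IsPeriodic L (lap f) := by
  intro x
  have h1 := periodic_pd1 ((contDiff_pd1 hf).differentiable (by simp))
    (periodic_pd1 (hf.differentiable (by simp)) hp) x
  have h2 := periodic_pd2 ((contDiff_pd2 hf).differentiable (by simp))
    (periodic_pd2 (hf.differentiable (by simp)) hp) x
  simp only [lap]
  exact ⟨by rw [h1.1, h2.1], by rw [h1.2, h2.2]⟩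

theorem contDiff_lap {f : ℝ × ℝ → ℝ} (hf : ContDiff ℝ (⊤ : ℕ∞) f) : ContDiff ℝ (⊤ : ℕ∞) (lap f) :=
  (contDiff_pd1 (contDiff_pd1 hf)).add (contDiff_pd2 (contDiff_pd2 hf))
theorem hasDerivAt_slice1 {g : ℝ × ℝ → ℝ} {x : ℝ × ℝ} (hg : DifferentiableAt ℝ g x) :
    HasDerivAt (fun s => g (s, x.2)) (pd1 g x) x.1 := by
  have hc : HasDerivAt (fun s : ℝ => (s, x.2)) ((1 : ℝ), (0 : ℝ)) x.1 :=
    (hasDerivAt_id x.1).prodMk (hasDerivAt_const x.1 x.2)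
  have := hg.hasFDerivAt.comp_hasDerivAt x.1 (by simpa using hc)
  simpa [pd1, Function.comp_def] using this

theorem hasDerivAt_slice2 {g : ℝ × ℝ → ℝ} {x : ℝ × ℝ} (hg : DifferentiableAt ℝ g x) :
    HasDerivAt (fun s => g (x.1, s)) (pd2 g x) x.2 := by
  have hc : HasDerivAt (fun s : ℝ => (x.1, s)) ((0 : ℝ), (1 : ℝ)) x.2 :=
    (hasDerivAt_const x.2 x.1).prodMk (hasDerivAt_id x.2)
  have := hg.hasFDerivAt.comp_hasDerivAt x.2 (by simpa using hc)
  simpa [pd2, Function.comp_def] using this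

theorem box_integrableOn {L : ℝ} {h : ℝ × ℝ → ℝ} (hc : Continuous h) :
    IntegrableOn h (box L) :=
  hc.continuousOn.integrableOn_compact (isCompact_Icc.prod isCompact_Icc)

/-- Fubini for the box, y-outer. -/
theorem box_integral_symm {L : ℝ} {h : ℝ × ℝ → ℝ} (hc : Continuous h) :
    ∫ x in box L, h x = ∫ y in Set.Icc (0:ℝ) L, ∫ s in Set.Icc (0:ℝ) L, h (s, y) := by
  rw [show (volume : Measure (ℝ × ℝ)).restrict (box L)
      = ((volume : Measure ℝ).restrict (Set.Icc 0 L)).prod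
        ((volume : Measure ℝ).restrict (Set.Icc 0 L)) by
    rw [Measure.prod_restrict, ← Measure.volume_eq_prod]; rfl]
  apply integral_prod_symm
  rw [Measure.prod_restrict, ← Measure.volume_eq_prod]
  exact box_integrableOn hc

/-- Fubini for the box, x-outer. -/
theorem box_integral_prod {L : ℝ} {h : ℝ × ℝ → ℝ} (hc : Continuous h) :
    ∫ x in box L, h x = ∫ s in Set.Icc (0:ℝ) L, ∫ y in Set.Icc (0:ℝ) L, h (s, y) := by
  rw [show (volume : Measure (ℝ × ℝ)).restrict (box L)
      = ((volume : Measure ℝ).restrict (Set.Icc 0 L)).prod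
        ((volume : Measure ℝ).restrict (Set.Icc 0 L)) by
    rw [Measure.prod_restrict, ← Measure.volume_eq_prod]; rfl]
  apply integral_prod
  rw [Measure.prod_restrict, ← Measure.volume_eq_prod]
  exact box_integrableOn hc

/-- 1D periodic integration by parts. -/
theorem ibp_1d {L : ℝ} (hL : 0 < L) {φ ψ φ' ψ' : ℝ → ℝ}
    (hφ : ∀ s, HasDerivAt φ (φ' s) s) (hψ : ∀ s, HasDerivAt ψ (ψ' s) s)
    (hφ' : Continuous φ') (hψ' : Continuous ψ')
    (hφp : φ L = φ 0) (hψp : ψ L = ψ 0) :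
    ∫ s in Set.Icc (0:ℝ) L, φ' s * ψ s = - ∫ s in Set.Icc (0:ℝ) L, φ s * ψ' s := by
  have hφc : Continuous φ := Differentiable.continuous (fun s => (hφ s).differentiableAt)
  have hψc : Continuous ψ := Differentiable.continuous (fun s => (hψ s).differentiableAt)
  have h := intervalIntegral.integral_deriv_mul_eq_sub (u := φ) (v := ψ) (u' := φ') (v' := ψ')
    (fun x _ => hφ x) (fun x _ => hψ x)
    (hφ'.intervalIntegrable 0 L) (hψ'.intervalIntegrable 0 L)
  rw [hφp, hψp, sub_self] at h
  have hsplit : (∫ x in (0:ℝ)..L, (φ' x * ψ x + φ x * ψ' x))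
      = (∫ x in (0:ℝ)..L, φ' x * ψ x) + ∫ x in (0:ℝ)..L, φ x * ψ' x :=
    intervalIntegral.integral_add ((hφ'.mul hψc).intervalIntegrable _ _)
      ((hφc.mul hψ').intervalIntegrable _ _)
  rw [hsplit] at h
  have key : (∫ x in (0:ℝ)..L, φ' x * ψ x) = - ∫ x in (0:ℝ)..L, φ x * ψ' x := by
    linarith
  rw [MeasureTheory.integral_Icc_eq_integral_Ioc, MeasureTheory.integral_Icc_eq_integral_Ioc,
    ← intervalIntegral.integral_of_le hL.le, ← intervalIntegral.integral_of_le hL.le, key]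
/-- 2D periodic IBP in the first variable. -/
theorem ibp_pd1 {L : ℝ} (hL : 0 < L) {f g : ℝ × ℝ → ℝ}
    (hf : ContDiff ℝ (⊤ : ℕ∞) f) (hg : ContDiff ℝ (⊤ : ℕ∞) g)
    (hfp : IsPeriodic L f) (hgp : IsPeriodic L g) :
    ∫ x in box L, pd1 f x * g x = - ∫ x in box L, f x * pd1 g x := by
  have hfc := hf.continuous
  have hgc := hg.continuous
  have hf1 := contDiff_pd1 hf
  have hg1 := contDiff_pd1 hg
  rw [box_integral_symm (h := fun x => pd1 f x * g x) ((hf1.continuous).mul hgc),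
      box_integral_symm (h := fun x => f x * pd1 g x) (hfc.mul hg1.continuous)]
  rw [← MeasureTheory.integral_neg]
  apply MeasureTheory.setIntegral_congr_fun measurableSet_Icc
  intro y _
  have key := ibp_1d hL (φ := fun s => f (s, y)) (ψ := fun s => g (s, y))
    (φ' := fun s => pd1 f (s, y)) (ψ' := fun s => pd1 g (s, y))
    (fun s => hasDerivAt_slice1 (x := (s, y)) (hf.differentiable (by simp) _))
    (fun s => hasDerivAt_slice1 (x := (s, y)) (hg.differentiable (by simp) _))
    (hf1.continuous.comp (continuous_id.prodMk continuous_const))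
    (hg1.continuous.comp (continuous_id.prodMk continuous_const))
    (by simpa using (hfp (0, y)).1) (by simpa using (hgp (0, y)).1)
  simpa using key

/-- 2D periodic IBP in the second variable. -/
theorem ibp_pd2 {L : ℝ} (hL : 0 < L) {f g : ℝ × ℝ → ℝ}
    (hf : ContDiff ℝ (⊤ : ℕ∞) f) (hg : ContDiff ℝ (⊤ : ℕ∞) g)
    (hfp : IsPeriodic L f) (hgp : IsPeriodic L g) :
    ∫ x in box L, pd2 f x * g x = - ∫ x in box L, f x * pd2 g x := by
  have hfc := hf.continuous
  have hgc := hg.continuous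
  have hf2 := contDiff_pd2 hf
  have hg2 := contDiff_pd2 hg
  rw [box_integral_prod (h := fun x => pd2 f x * g x) ((hf2.continuous).mul hgc),
      box_integral_prod (h := fun x => f x * pd2 g x) (hfc.mul hg2.continuous)]
  rw [← MeasureTheory.integral_neg]
  apply MeasureTheory.setIntegral_congr_fun measurableSet_Icc
  intro y _
  have key := ibp_1d hL (φ := fun s => f (y, s)) (ψ := fun s => g (y, s))
    (φ' := fun s => pd2 f (y, s)) (ψ' := fun s => pd2 g (y, s))
    (fun s => hasDerivAt_slice2 (x := (y, s)) (hf.differentiable (by simp) _))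
    (fun s => hasDerivAt_slice2 (x := (y, s)) (hg.differentiable (by simp) _))
    (hf2.continuous.comp (continuous_const.prodMk continuous_id))
    (hg2.continuous.comp (continuous_const.prodMk continuous_id))
    (by simpa using (hfp (y, 0)).2) (by simpa using (hgp (y, 0)).2)
  simpa using key

theorem ibp_gradlap {L : ℝ} (hL : 0 < L) {f g : ℝ × ℝ → ℝ}
    (hf : ContDiff ℝ (⊤ : ℕ∞) f) (hg : ContDiff ℝ (⊤ : ℕ∞) g)
    (hfp : IsPeriodic L f) (hgp : IsPeriodic L g) :
    ∫ x in box L, (pd1 f x * pd1 g x + pd2 f x * pd2 g x)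
      = - ∫ x in box L, f x * lap g x := by
  have hgd := hg.differentiable (by simp)
  have h1 := ibp_pd1 hL hf (contDiff_pd1 hg) hfp (periodic_pd1 hgd hgp)
  have h2 := ibp_pd2 hL hf (contDiff_pd2 hg) hfp (periodic_pd2 hgd hgp)
  have i1 : IntegrableOn (fun x => pd1 f x * pd1 g x) (box L) :=
    box_integrableOn ((contDiff_pd1 hf).continuous.mul (contDiff_pd1 hg).continuous)
  have i2 : IntegrableOn (fun x => pd2 f x * pd2 g x) (box L) :=
    box_integrableOn ((contDiff_pd2 hf).continuous.mul (contDiff_pd2 hg).continuous)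
  have j1 : IntegrableOn (fun x => f x * pd1 (pd1 g) x) (box L) :=
    box_integrableOn (hf.continuous.mul (contDiff_pd1 (contDiff_pd1 hg)).continuous)
  have j2 : IntegrableOn (fun x => f x * pd2 (pd2 g) x) (box L) :=
    box_integrableOn (hf.continuous.mul (contDiff_pd2 (contDiff_pd2 hg)).continuous)
  rw [MeasureTheory.integral_add i1 i2, h1, h2]
  have hcg : (∫ x in box L, f x * lap g x)
      = (∫ x in box L, (f x * pd1 (pd1 g) x + f x * pd2 (pd2 g) x)) := by
    apply MeasureTheory.setIntegral_congr_fun (measurableSet_Icc.prod measurableSet_Icc)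
    intro x _
    simp [lap, mul_add]
  rw [hcg, MeasureTheory.integral_add j1 j2]
  ring

theorem ibp_laplap {L : ℝ} (hL : 0 < L) {f g : ℝ × ℝ → ℝ}
    (hf : ContDiff ℝ (⊤ : ℕ∞) f) (hg : ContDiff ℝ (⊤ : ℕ∞) g)
    (hfp : IsPeriodic L f) (hgp : IsPeriodic L g) :
    ∫ x in box L, lap f x * g x = ∫ x in box L, f x * lap g x := by
  have hfd := hf.differentiable (by simp)
  have h1 := ibp_pd1 hL (contDiff_pd1 hf) hg (periodic_pd1 hfd hfp) hgp
  have h2 := ibp_pd2 hL (contDiff_pd2 hf) hg (periodic_pd2 hfd hfp) hgp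
  have i1 : IntegrableOn (fun x => pd1 (pd1 f) x * g x) (box L) :=
    box_integrableOn ((contDiff_pd1 (contDiff_pd1 hf)).continuous.mul hg.continuous)
  have i2 : IntegrableOn (fun x => pd2 (pd2 f) x * g x) (box L) :=
    box_integrableOn ((contDiff_pd2 (contDiff_pd2 hf)).continuous.mul hg.continuous)
  have hcg : (∫ x in box L, lap f x * g x)
      = (∫ x in box L, (pd1 (pd1 f) x * g x + pd2 (pd2 f) x * g x)) := by
    apply MeasureTheory.setIntegral_congr_fun (measurableSet_Icc.prod measurableSet_Icc)
    intro x _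
    simp [lap, add_mul]
  have j1 : IntegrableOn (fun x => pd1 f x * pd1 g x) (box L) :=
    box_integrableOn ((contDiff_pd1 hf).continuous.mul (contDiff_pd1 hg).continuous)
  have j2 : IntegrableOn (fun x => pd2 f x * pd2 g x) (box L) :=
    box_integrableOn ((contDiff_pd2 hf).continuous.mul (contDiff_pd2 hg).continuous)
  rw [hcg, MeasureTheory.integral_add i1 i2, h1, h2, ← neg_add,
    ← MeasureTheory.integral_add j1 j2]
  have := ibp_gradlap hL hf hg hfp hgp
  rw [this, neg_neg]

theorem aux_dirDeriv_comm {V : Type*} [NormedAddCommGroup V] [NormedSpace ℝ V]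
    {f : V → ℝ} (hf : ContDiff ℝ (⊤ : ℕ∞) f) (p v w : V) :
    fderiv ℝ (fun q => fderiv ℝ f q v) p w = fderiv ℝ (fun q => fderiv ℝ f q w) p v := by
  have hd : Differentiable ℝ (fderiv ℝ f) := (hf.fderiv_right (m := (⊤ : ℕ∞)) (by simp)).differentiable (by simp)
  have h1 : ∀ z : V, fderiv ℝ (fun q => fderiv ℝ f q z) p = (fderiv ℝ (fderiv ℝ f) p).flip z := by
    intro z
    have := fderiv_clm_apply (𝕜 := ℝ) (c := fderiv ℝ f) (u := fun _ => z)
      (hd p) (differentiableAt_const z)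
    simpa [fderiv_const] using this
  have hsym := second_derivative_symmetric (f := f) (f' := fderiv ℝ f)
    (f'' := fderiv ℝ (fderiv ℝ f) p) (x := p)
    (fun y => (hf.differentiable (by simp) y).hasFDerivAt) (hd p).hasFDerivAt v w
  simp only [h1, ContinuousLinearMap.flip_apply]
  exact hsym.symm

def Dx (f : ℝ × (ℝ × ℝ) → ℝ) (p : ℝ × (ℝ × ℝ)) : ℝ := fderiv ℝ f p (0, (1, 0))
def Dy (f : ℝ × (ℝ × ℝ) → ℝ) (p : ℝ × (ℝ × ℝ)) : ℝ := fderiv ℝ f p (0, (0, 1))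
def Dt (f : ℝ × (ℝ × ℝ) → ℝ) (p : ℝ × (ℝ × ℝ)) : ℝ := fderiv ℝ f p (1, 0)

theorem contDiff_Dx {f : ℝ × (ℝ × ℝ) → ℝ} (hf : ContDiff ℝ (⊤ : ℕ∞) f) : ContDiff ℝ (⊤ : ℕ∞) (Dx f) :=
  aux_contDiff_dirDeriv hf _
theorem contDiff_Dy {f : ℝ × (ℝ × ℝ) → ℝ} (hf : ContDiff ℝ (⊤ : ℕ∞) f) : ContDiff ℝ (⊤ : ℕ∞) (Dy f) :=
  aux_contDiff_dirDeriv hf _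
theorem contDiff_Dt {f : ℝ × (ℝ × ℝ) → ℝ} (hf : ContDiff ℝ (⊤ : ℕ∞) f) : ContDiff ℝ (⊤ : ℕ∞) (Dt f) :=
  aux_contDiff_dirDeriv hf _

theorem Dt_Dx_comm {f : ℝ × (ℝ × ℝ) → ℝ} (hf : ContDiff ℝ (⊤ : ℕ∞) f) (p : ℝ × (ℝ × ℝ)) :
    Dt (Dx f) p = Dx (Dt f) p := aux_dirDeriv_comm hf p _ _
theorem Dt_Dy_comm {f : ℝ × (ℝ × ℝ) → ℝ} (hf : ContDiff ℝ (⊤ : ℕ∞) f) (p : ℝ × (ℝ × ℝ)) :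
    Dt (Dy f) p = Dy (Dt f) p := aux_dirDeriv_comm hf p _ _

theorem hasDerivAt_tslice {f : ℝ × (ℝ × ℝ) → ℝ} (hf : ContDiff ℝ (⊤ : ℕ∞) f)
    (t : ℝ) (x : ℝ × ℝ) :
    HasDerivAt (fun s => f (s, x)) (Dt f (t, x)) t := by
  have hc : HasDerivAt (fun s : ℝ => (s, x)) ((1 : ℝ), (0 : ℝ × ℝ)) t :=
    (hasDerivAt_id t).prodMk (hasDerivAt_const t x)
  exact (hf.differentiable (by simp) _).hasFDerivAt.comp_hasDerivAt t hc

theorem pd1_slice {f : ℝ × (ℝ × ℝ) → ℝ} (hf : ContDiff ℝ (⊤ : ℕ∞) f) (t : ℝ) :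
    pd1 (fun y => f (t, y)) = fun x => Dx f (t, x) := by
  funext x
  have hj : HasFDerivAt (fun y : ℝ × ℝ => ((t : ℝ), y))
      (ContinuousLinearMap.inr ℝ ℝ (ℝ × ℝ)) x :=
    (hasFDerivAt_const t x).prodMk (hasFDerivAt_id x)
  have := ((hf.differentiable (by simp) (t, x)).hasFDerivAt.comp x hj).fderiv
  simp only [pd1, Dx]
  rw [show (fun y : ℝ × ℝ => f (t, y)) = f ∘ (fun y : ℝ × ℝ => ((t : ℝ), y)) from rfl, this]
  rfl

theorem pd2_slice {f : ℝ × (ℝ × ℝ) → ℝ} (hf : ContDiff ℝ (⊤ : ℕ∞) f) (t : ℝ) :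
    pd2 (fun y => f (t, y)) = fun x => Dy f (t, x) := by
  funext x
  have hj : HasFDerivAt (fun y : ℝ × ℝ => ((t : ℝ), y))
      (ContinuousLinearMap.inr ℝ ℝ (ℝ × ℝ)) x :=
    (hasFDerivAt_const t x).prodMk (hasFDerivAt_id x)
  have := ((hf.differentiable (by simp) (t, x)).hasFDerivAt.comp x hj).fderiv
  simp only [pd2, Dy]
  rw [show (fun y : ℝ × ℝ => f (t, y)) = f ∘ (fun y : ℝ × ℝ => ((t : ℝ), y)) from rfl, this]
  rfl

theorem lap_slice {f : ℝ × (ℝ × ℝ) → ℝ} (hf : ContDiff ℝ (⊤ : ℕ∞) f) (t : ℝ) :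
    lap (fun y => f (t, y)) = fun x => Dx (Dx f) (t, x) + Dy (Dy f) (t, x) := by
  funext x
  simp only [lap, pd1_slice hf t, pd2_slice hf t,
    pd1_slice (contDiff_Dx hf) t, pd2_slice (contDiff_Dy hf) t]

theorem gradSq_slice {f : ℝ × (ℝ × ℝ) → ℝ} (hf : ContDiff ℝ (⊤ : ℕ∞) f) (t : ℝ) :
    gradSq (fun y => f (t, y)) = fun x => Dx f (t, x) ^ 2 + Dy f (t, x) ^ 2 := by
  funext x
  simp only [gradSq, pd1_slice hf t, pd2_slice hf t]

def SP (L : ℝ) (f : ℝ × (ℝ × ℝ) → ℝ) : Prop := ∀ t : ℝ, IsPeriodic L (fun x => f (t, x))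

theorem SP.Dx {L : ℝ} {f : ℝ × (ℝ × ℝ) → ℝ} (hf : ContDiff ℝ (⊤ : ℕ∞) f) (hp : SP L f) :
    SP L (Dx f) := by
  intro t
  have := periodic_pd1 (f := fun y => f (t, y))
    ((hf.comp (contDiff_const.prodMk contDiff_id)).differentiable (by simp)) (hp t)
  rwa [pd1_slice hf t] at this

theorem SP.Dy {L : ℝ} {f : ℝ × (ℝ × ℝ) → ℝ} (hf : ContDiff ℝ (⊤ : ℕ∞) f) (hp : SP L f) :
    SP L (Dy f) := by
  intro t
  have := periodic_pd2 (f := fun y => f (t, y))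
    ((hf.comp (contDiff_const.prodMk contDiff_id)).differentiable (by simp)) (hp t)
  rwa [pd2_slice hf t] at this

theorem SP.Dt {L : ℝ} {f : ℝ × (ℝ × ℝ) → ℝ} (hf : ContDiff ℝ (⊤ : ℕ∞) f) (hp : SP L f) :
    SP L (Dt f) := by
  intro t x
  constructor
  · have h1 := (hasDerivAt_tslice hf t (x.1 + L, x.2)).deriv
    have h2 := (hasDerivAt_tslice hf t x).deriv
    simp only []
    rw [← h1, ← h2]
    congr 1
    funext s
    exact (hp s x).1
  · have h1 := (hasDerivAt_tslice hf t (x.1, x.2 + L)).deriv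
    have h2 := (hasDerivAt_tslice hf t x).deriv
    simp only []
    rw [← h1, ← h2]
    congr 1
    funext s
    exact (hp s x).2

theorem contDiff_F (τ : ℝ) : ContDiff ℝ (⊤ : ℕ∞) (F τ) := by
  unfold F
  apply ContDiff.mul
  · exact (contDiff_const.mul ((contDiff_id.add contDiff_const).pow 2))
  · exact (contDiff_const.mul ((contDiff_id.sub contDiff_const).pow 2)).add
      ((contDiff_const.mul contDiff_const).mul (contDiff_id.sub contDiff_const))

theorem contDiff_deriv1d {f : ℝ → ℝ} (hf : ContDiff ℝ (⊤ : ℕ∞) f) : ContDiff ℝ (⊤ : ℕ∞) (deriv f) := by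
  have h : deriv f = fun t => fderiv ℝ f t 1 := by
    funext t; rfl
  rw [h]
  exact (hf.fderiv_right (by simp)).clm_apply contDiff_const


def Wf (τ ε : ℝ) (u : ℝ × (ℝ × ℝ) → ℝ) : ℝ × (ℝ × ℝ) → ℝ :=
  fun p => ε ^ 2 * (Dx (Dx u) p + Dy (Dy u) p) - deriv (F τ) (u p)

def Gf (τ ε η₁ η₂ : ℝ) (u : ℝ × (ℝ × ℝ) → ℝ) : ℝ × (ℝ × ℝ) → ℝ :=
  fun p => (1/2) * (Wf τ ε u p) ^ 2 - (ε ^ 2 / 2) * η₁ * ((Dx u p) ^ 2 + (Dy u p) ^ 2)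
    - η₂ * F τ (u p)

def Nf (τ ε η₁ η₂ : ℝ) (u : ℝ × (ℝ × ℝ) → ℝ) : ℝ × (ℝ × ℝ) → ℝ :=
  fun p => Wf τ ε u p * (ε ^ 2 * (Dx (Dx (Dt u)) p + Dy (Dy (Dt u)) p)
      - deriv (deriv (F τ)) (u p) * Dt u p)
    - (ε ^ 2 / 2) * η₁ * (2 * Dx u p * Dx (Dt u) p + 2 * Dy u p * Dy (Dt u) p)
    - η₂ * (deriv (F τ) (u p) * Dt u p)

theorem contDiff_Wf {τ ε : ℝ} {u : ℝ × (ℝ × ℝ) → ℝ} (hu : ContDiff ℝ (⊤ : ℕ∞) u) :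
    ContDiff ℝ (⊤ : ℕ∞) (Wf τ ε u) :=
  (contDiff_const.mul ((contDiff_Dx (contDiff_Dx hu)).add (contDiff_Dy (contDiff_Dy hu)))).sub
    ((contDiff_deriv1d (contDiff_F τ)).comp hu)

theorem contDiff_Gf {τ ε η₁ η₂ : ℝ} {u : ℝ × (ℝ × ℝ) → ℝ} (hu : ContDiff ℝ (⊤ : ℕ∞) u) :
    ContDiff ℝ (⊤ : ℕ∞) (Gf τ ε η₁ η₂ u) :=
  ((contDiff_const.mul ((contDiff_Wf hu).pow 2)).sub
    (contDiff_const.mul (((contDiff_Dx hu).pow 2).add ((contDiff_Dy hu).pow 2)))).sub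
    (contDiff_const.mul ((contDiff_F τ).comp hu))

theorem contDiff_Nf {τ ε η₁ η₂ : ℝ} {u : ℝ × (ℝ × ℝ) → ℝ} (hu : ContDiff ℝ (⊤ : ℕ∞) u) :
    ContDiff ℝ (⊤ : ℕ∞) (Nf τ ε η₁ η₂ u) := by
  have hV := contDiff_Dt hu
  exact (((contDiff_Wf hu).mul
      ((contDiff_const.mul ((contDiff_Dx (contDiff_Dx hV)).add
        (contDiff_Dy (contDiff_Dy hV)))).sub
        (((contDiff_deriv1d (contDiff_deriv1d (contDiff_F τ))).comp hu).mul hV))).sub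
    (contDiff_const.mul
      (((contDiff_const.mul (contDiff_Dx hu)).mul (contDiff_Dx hV)).add
        ((contDiff_const.mul (contDiff_Dy hu)).mul (contDiff_Dy hV))))).sub
    (contDiff_const.mul (((contDiff_deriv1d (contDiff_F τ)).comp hu).mul hV))

theorem hasDerivAt_Gf {τ ε η₁ η₂ : ℝ} {u : ℝ × (ℝ × ℝ) → ℝ} (hu : ContDiff ℝ (⊤ : ℕ∞) u)
    (t : ℝ) (x : ℝ × ℝ) :
    HasDerivAt (fun s => Gf τ ε η₁ η₂ u (s, x)) (Nf τ ε η₁ η₂ u (t, x)) t := by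
  have c1 : Dt (Dx u) = Dx (Dt u) := funext (Dt_Dx_comm hu)
  have c2 : Dt (Dy u) = Dy (Dt u) := funext (Dt_Dy_comm hu)
  have d1 : Dt (Dx (Dx u)) = Dx (Dx (Dt u)) := by
    funext q; rw [Dt_Dx_comm (contDiff_Dx hu) q, c1]
  have d2 : Dt (Dy (Dy u)) = Dy (Dy (Dt u)) := by
    funext q; rw [Dt_Dy_comm (contDiff_Dy hu) q, c2]
  have hu_t : HasDerivAt (fun s => u (s, x)) (Dt u (t, x)) t := hasDerivAt_tslice hu t x
  have hxx := hasDerivAt_tslice (contDiff_Dx (contDiff_Dx hu)) t x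
  rw [d1] at hxx
  have hyy := hasDerivAt_tslice (contDiff_Dy (contDiff_Dy hu)) t x
  rw [d2] at hyy
  have hx1 := hasDerivAt_tslice (contDiff_Dx hu) t x
  rw [c1] at hx1
  have hy1 := hasDerivAt_tslice (contDiff_Dy hu) t x
  rw [c2] at hy1
  have hF' : HasDerivAt (F τ) (deriv (F τ) (u (t, x))) (u (t, x)) :=
    ((contDiff_F τ).differentiable (by simp) _).hasDerivAt
  have hF'' : HasDerivAt (deriv (F τ)) (deriv (deriv (F τ)) (u (t, x))) (u (t, x)) :=
    ((contDiff_deriv1d (contDiff_F τ)).differentiable (by simp) _).hasDerivAt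
  have hFc : HasDerivAt (fun s => F τ (u (s, x)))
      (deriv (F τ) (u (t, x)) * Dt u (t, x)) t := by have := hF'.comp t hu_t; exact this
  have hF2c : HasDerivAt (fun s => deriv (F τ) (u (s, x)))
      (deriv (deriv (F τ)) (u (t, x)) * Dt u (t, x)) t := by have := hF''.comp t hu_t; exact this
  have hWt : HasDerivAt (fun s => Wf τ ε u (s, x))
      (ε ^ 2 * (Dx (Dx (Dt u)) (t, x) + Dy (Dy (Dt u)) (t, x))
        - deriv (deriv (F τ)) (u (t, x)) * Dt u (t, x)) t :=
    ((hxx.add hyy).const_mul (ε ^ 2)).sub hF2c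
  have h1 := (hWt.pow 2).const_mul ((1 : ℝ)/2)
  have h2 := ((hx1.pow 2).add (hy1.pow 2)).const_mul ((ε ^ 2 / 2) * η₁)
  have h3 := hFc.const_mul η₂
  have total := (h1.sub h2).sub h3
  have : HasDerivAt (fun s => Gf τ ε η₁ η₂ u (s, x)) ((1:ℝ)/2 *
      ((2:ℕ) * Wf τ ε u (t, x) ^ (2 - 1) *
        (ε ^ 2 * (Dx (Dx (Dt u)) (t, x) + Dy (Dy (Dt u)) (t, x))
          - deriv (deriv (F τ)) (u (t, x)) * Dt u (t, x)))
      - ε ^ 2 / 2 * η₁ * ((2:ℕ) * Dx u (t, x) ^ (2 - 1) * Dx (Dt u) (t, x)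
          + (2:ℕ) * Dy u (t, x) ^ (2 - 1) * Dy (Dt u) (t, x))
      - η₂ * (deriv (F τ) (u (t, x)) * Dt u (t, x))) t := total
  convert this using 1
  simp only [Nf]
  push_cast
  ring


theorem SP_Wf {L τ ε : ℝ} {u : ℝ × (ℝ × ℝ) → ℝ} (hu : ContDiff ℝ (⊤ : ℕ∞) u) (hup : SP L u) :
    SP L (Wf τ ε u) := by
  intro t x
  have h1 := SP.Dx (contDiff_Dx hu) (SP.Dx hu hup) t x
  have h2 := SP.Dy (contDiff_Dy hu) (SP.Dy hu hup) t x
  have h0 := hup t x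
  simp only [] at h1 h2 h0
  constructor
  · simp only [Wf]
    rw [h1.1, h2.1, h0.1]
  · simp only [Wf]
    rw [h1.2, h2.2, h0.2]


theorem spatial_identity {L : ℝ} (hL : 0 < L) {τ ε η₁ η₂ M : ℝ}
    {u₀ v w m : ℝ × ℝ → ℝ}
    (hu₀ : ContDiff ℝ (⊤ : ℕ∞) u₀) (hv : ContDiff ℝ (⊤ : ℕ∞) v) (hw : ContDiff ℝ (⊤ : ℕ∞) w)
    (hpu₀ : IsPeriodic L u₀) (hpv : IsPeriodic L v) (hpw : IsPeriodic L w)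
    (hmdef : ∀ x, m x = ε ^ 2 * lap w x - deriv (deriv (F τ)) (u₀ x) * w x
      + ε ^ 2 * η₁ * lap u₀ x - η₂ * deriv (F τ) (u₀ x))
    (hvdef : ∀ x, v x = M * lap m x) :
    ∫ x in box L, (w x * (ε ^ 2 * lap v x - deriv (deriv (F τ)) (u₀ x) * v x)
      - (ε ^ 2 / 2) * η₁ * (2 * pd1 u₀ x * pd1 v x + 2 * pd2 u₀ x * pd2 v x)
      - η₂ * (deriv (F τ) (u₀ x) * v x))
    = -M * ∫ x in box L, gradSq m x := by
  have hbox : MeasurableSet (box L) := measurableSet_Icc.prod measurableSet_Icc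
  have hF2c : Continuous (fun x => deriv (deriv (F τ)) (u₀ x)) :=
    ((contDiff_deriv1d (contDiff_deriv1d (contDiff_F τ))).comp hu₀).continuous
  have hF1c : Continuous (fun x => deriv (F τ) (u₀ x)) :=
    ((contDiff_deriv1d (contDiff_F τ)).comp hu₀).continuous
  have hm : ContDiff ℝ (⊤ : ℕ∞) m := by
    rw [funext hmdef]
    exact (((contDiff_const.mul (contDiff_lap hw)).sub
      (((contDiff_deriv1d (contDiff_deriv1d (contDiff_F τ))).comp hu₀).mul hw)).add
      (contDiff_const.mul (contDiff_lap hu₀))).sub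
      (contDiff_const.mul ((contDiff_deriv1d (contDiff_F τ)).comp hu₀))
  have hpm : IsPeriodic L m := by
    intro x
    have l1 := periodic_lap hw hpw x
    have l2 := periodic_lap hu₀ hpu₀ x
    have l0 := hpu₀ x
    have lw := hpw x
    exact ⟨by rw [hmdef, hmdef, l1.1, l2.1, l0.1, lw.1],
           by rw [hmdef, hmdef, l1.2, l2.2, l0.2, lw.2]⟩
  -- integrability of all pieces
  have i1 : IntegrableOn (fun x => ε ^ 2 * (w x * lap v x)) (box L) :=
    box_integrableOn (continuous_const.mul (hw.continuous.mul (contDiff_lap hv).continuous))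
  have i2 : IntegrableOn (fun x => deriv (deriv (F τ)) (u₀ x) * (w x * v x)) (box L) :=
    box_integrableOn (hF2c.mul (hw.continuous.mul hv.continuous))
  have i3 : IntegrableOn (fun x => ε ^ 2 * η₁ *
      (pd1 u₀ x * pd1 v x + pd2 u₀ x * pd2 v x)) (box L) :=
    box_integrableOn (continuous_const.mul
      (((contDiff_pd1 hu₀).continuous.mul (contDiff_pd1 hv).continuous).add
        ((contDiff_pd2 hu₀).continuous.mul (contDiff_pd2 hv).continuous)))
  have i4 : IntegrableOn (fun x => η₂ * (deriv (F τ) (u₀ x) * v x)) (box L) :=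
    box_integrableOn (continuous_const.mul (hF1c.mul hv.continuous))
  have j1 : IntegrableOn (fun x => ε ^ 2 * (lap w x * v x)) (box L) :=
    box_integrableOn (continuous_const.mul ((contDiff_lap hw).continuous.mul hv.continuous))
  have j3 : IntegrableOn (fun x => ε ^ 2 * η₁ * (v x * lap u₀ x)) (box L) :=
    box_integrableOn (continuous_const.mul (hv.continuous.mul (contDiff_lap hu₀).continuous))
  -- step 1: normal form
  have e0 : ∫ x in box L, (w x * (ε ^ 2 * lap v x - deriv (deriv (F τ)) (u₀ x) * v x)
      - (ε ^ 2 / 2) * η₁ * (2 * pd1 u₀ x * pd1 v x + 2 * pd2 u₀ x * pd2 v x)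
      - η₂ * (deriv (F τ) (u₀ x) * v x))
      = ∫ x in box L, (ε ^ 2 * (w x * lap v x) - deriv (deriv (F τ)) (u₀ x) * (w x * v x)
        - ε ^ 2 * η₁ * (pd1 u₀ x * pd1 v x + pd2 u₀ x * pd2 v x)
        - η₂ * (deriv (F τ) (u₀ x) * v x)) := by
    apply MeasureTheory.setIntegral_congr_fun hbox
    intro x _
    ring
  -- step 2: split
  have e1 : ∫ x in box L, (ε ^ 2 * (w x * lap v x) - deriv (deriv (F τ)) (u₀ x) * (w x * v x)
        - ε ^ 2 * η₁ * (pd1 u₀ x * pd1 v x + pd2 u₀ x * pd2 v x)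
        - η₂ * (deriv (F τ) (u₀ x) * v x))
      = (∫ x in box L, ε ^ 2 * (w x * lap v x))
        - (∫ x in box L, deriv (deriv (F τ)) (u₀ x) * (w x * v x))
        - (∫ x in box L, ε ^ 2 * η₁ * (pd1 u₀ x * pd1 v x + pd2 u₀ x * pd2 v x))
        - (∫ x in box L, η₂ * (deriv (F τ) (u₀ x) * v x)) := by
    have i12 : IntegrableOn (fun x => ε ^ 2 * (w x * lap v x)
        - deriv (deriv (F τ)) (u₀ x) * (w x * v x)) (box L) := i1.sub i2
    have i123 : IntegrableOn (fun x => ε ^ 2 * (w x * lap v x)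
        - deriv (deriv (F τ)) (u₀ x) * (w x * v x)
        - ε ^ 2 * η₁ * (pd1 u₀ x * pd1 v x + pd2 u₀ x * pd2 v x)) (box L) := i12.sub i3
    rw [MeasureTheory.integral_sub i123 i4, MeasureTheory.integral_sub i12 i3,
        MeasureTheory.integral_sub i1 i2]
  -- step 3: IBP on the first piece
  have e2 : (∫ x in box L, ε ^ 2 * (w x * lap v x))
      = ∫ x in box L, ε ^ 2 * (lap w x * v x) := by
    rw [MeasureTheory.integral_const_mul, MeasureTheory.integral_const_mul,
      ← ibp_laplap hL hw hv hpw hpv]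
  -- step 4: IBP on the gradient piece
  have e3 : (∫ x in box L, ε ^ 2 * η₁ * (pd1 u₀ x * pd1 v x + pd2 u₀ x * pd2 v x))
      = - ∫ x in box L, ε ^ 2 * η₁ * (v x * lap u₀ x) := by
    rw [MeasureTheory.integral_const_mul, MeasureTheory.integral_const_mul]
    rw [show (∫ x in box L, (pd1 u₀ x * pd1 v x + pd2 u₀ x * pd2 v x))
        = ∫ x in box L, (pd1 v x * pd1 u₀ x + pd2 v x * pd2 u₀ x) from
      MeasureTheory.setIntegral_congr_fun hbox (fun x _ => by ring)]
    rw [ibp_gradlap hL hv hu₀ hpv hpu₀, mul_neg]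
  -- step 5: recombine into ∫ m * v
  have e4 : (∫ x in box L, ε ^ 2 * (lap w x * v x))
        - (∫ x in box L, deriv (deriv (F τ)) (u₀ x) * (w x * v x))
        - (- ∫ x in box L, ε ^ 2 * η₁ * (v x * lap u₀ x))
        - (∫ x in box L, η₂ * (deriv (F τ) (u₀ x) * v x))
      = ∫ x in box L, m x * v x := by
    rw [sub_neg_eq_add]
    have j12 : IntegrableOn (fun x => ε ^ 2 * (lap w x * v x)
        - deriv (deriv (F τ)) (u₀ x) * (w x * v x)) (box L) := j1.sub i2
    have j123 : IntegrableOn (fun x => ε ^ 2 * (lap w x * v x)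
        - deriv (deriv (F τ)) (u₀ x) * (w x * v x)
        + ε ^ 2 * η₁ * (v x * lap u₀ x)) (box L) := j12.add j3
    rw [← MeasureTheory.integral_sub j1 i2, ← MeasureTheory.integral_add j12 j3,
      ← MeasureTheory.integral_sub j123 i4]
    apply MeasureTheory.setIntegral_congr_fun hbox
    intro x _
    beta_reduce
    rw [hmdef x]
    ring
  -- step 6: use the evolution equation and a final IBP
  have e5 : (∫ x in box L, m x * v x) = M * ∫ x in box L, m x * lap m x := by
    rw [← MeasureTheory.integral_const_mul]
    apply MeasureTheory.setIntegral_congr_fun hbox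
    intro x _
    beta_reduce
    rw [hvdef x]
    ring
  have e6 : (∫ x in box L, m x * lap m x) = - ∫ x in box L, gradSq m x := by
    have hgl := ibp_gradlap hL hm hm hpm hpm
    rw [show (∫ x in box L, gradSq m x)
        = ∫ x in box L, (pd1 m x * pd1 m x + pd2 m x * pd2 m x) from
      MeasureTheory.setIntegral_congr_fun hbox (fun x _ => by simp [gradSq]; ring)]
    rw [hgl]
    ring
  rw [e0, e1, e2, e3, e4, e5, e6]
  ring

/-- Energy dissipation for the FCH equation: if `∂ₜ u = M Δₓ μ` with
`μ = ε²Δₓ(ε²Δₓu − F′(u)) − F″(u)(ε²Δₓu − F′(u)) + ε²η₁Δₓu − η₂F′(u)`, then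
`t ↦ E_FCH(u(t,·))` is differentiable with derivative `−M ∫_Ω |∇ₓμ(t₀,x)|² dx` at each `t₀`. -/
theorem EFCH_dissipation
    (L : ℝ) (hL : 0 < L) (τ ε η₁ η₂ M : ℝ) (hM : 0 < M)
    (u : ℝ × (ℝ × ℝ) → ℝ) (hu : ContDiff ℝ (⊤ : ℕ∞) u)
    (hup : ∀ t : ℝ, IsPeriodic L (fun x => u (t, x)))
    (μ : ℝ × (ℝ × ℝ) → ℝ)
    (hμ : ∀ (t : ℝ) (x : ℝ × ℝ),
      μ (t, x) = ε ^ 2 * lap (fun y => ε ^ 2 * lap (fun z => u (t, z)) y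
          - deriv (F τ) (u (t, y))) x
        - deriv (deriv (F τ)) (u (t, x))
          * (ε ^ 2 * lap (fun y => u (t, y)) x - deriv (F τ) (u (t, x)))
        + ε ^ 2 * η₁ * lap (fun y => u (t, y)) x - η₂ * deriv (F τ) (u (t, x)))
    (heq : ∀ (t : ℝ) (x : ℝ × ℝ),
      deriv (fun s => u (s, x)) t = M * lap (fun y => μ (t, y)) x) :
    ∀ t₀ : ℝ, HasDerivAt (fun t => EFCH L τ ε η₁ η₂ (fun x => u (t, x)))
      (-M * ∫ x in box L, gradSq (fun y => μ (t₀, y)) x) t₀ := by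
  intro t₀
  have hG := contDiff_Gf (τ := τ) (ε := ε) (η₁ := η₁) (η₂ := η₂) hu
  have hN := contDiff_Nf (τ := τ) (ε := ε) (η₁ := η₁) (η₂ := η₂) hu
  -- Step A : rewrite the energy as an integral of a jointly smooth integrand
  have hEF : (fun t => EFCH L τ ε η₁ η₂ (fun x => u (t, x)))
      = fun t => ∫ x in box L, Gf τ ε η₁ η₂ u (t, x) := by
    funext t
    simp only [EFCH, Gf, Wf, lap_slice hu t, gradSq_slice hu t]
  rw [hEF]
  -- Step B : differentiate under the integral sign
  obtain ⟨C, hC⟩ := IsCompact.exists_bound_of_continuousOn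
    ((isCompact_Icc (a := t₀ - 1) (b := t₀ + 1)).prod
      (isCompact_Icc.prod isCompact_Icc))
    (f := Nf τ ε η₁ η₂ u) (hN.continuous.continuousOn)
  have key := hasDerivAt_integral_of_dominated_loc_of_deriv_le
    (μ := (volume : Measure (ℝ × ℝ)).restrict (box L))
    (F := fun t x => Gf τ ε η₁ η₂ u (t, x))
    (F' := fun t x => Nf τ ε η₁ η₂ u (t, x)) (x₀ := t₀)
    (bound := fun _ => C) (s := Metric.ball t₀ 1) (Metric.ball_mem_nhds t₀ one_pos)
    (Filter.Eventually.of_forall (fun t =>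
      (hG.continuous.comp (Continuous.prodMk_right t)).aestronglyMeasurable))
    (box_integrableOn (hG.continuous.comp (Continuous.prodMk_right t₀)))
    ((hN.continuous.comp (Continuous.prodMk_right t₀)).aestronglyMeasurable)
    (((ae_restrict_mem (measurableSet_Icc.prod measurableSet_Icc)).mono
      (fun x hx t ht => hC (t, x) ⟨by
        rw [Metric.mem_ball, Real.dist_eq] at ht
        have := abs_lt.1 ht
        exact ⟨by linarith [this.1], by linarith [this.2]⟩, hx⟩)))
    (MeasureTheory.integrableOn_const
      (isCompact_Icc.prod isCompact_Icc).measure_lt_top.ne)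
    (Filter.Eventually.of_forall (fun x t _ => hasDerivAt_Gf hu t x))
  have hkey := key.2
  -- Step C : identify the derivative
  have hint : (∫ x in box L, Nf τ ε η₁ η₂ u (t₀, x))
      = -M * ∫ x in box L, gradSq (fun y => μ (t₀, y)) x := by
    have hj : ContDiff ℝ (⊤ : ℕ∞) (fun x : ℝ × ℝ => ((t₀ : ℝ), x)) := contDiff_const.prodMk contDiff_id
    have hu₀ : ContDiff ℝ (⊤ : ℕ∞) (fun x : ℝ × ℝ => u (t₀, x)) := hu.comp hj
    have hv : ContDiff ℝ (⊤ : ℕ∞) (fun x : ℝ × ℝ => Dt u (t₀, x)) := (contDiff_Dt hu).comp hj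
    have hw : ContDiff ℝ (⊤ : ℕ∞) (fun x : ℝ × ℝ => Wf τ ε u (t₀, x)) := (contDiff_Wf hu).comp hj
    have hmdef : ∀ x : ℝ × ℝ, μ (t₀, x)
        = ε ^ 2 * lap (fun y => Wf τ ε u (t₀, y)) x
          - deriv (deriv (F τ)) (u (t₀, x)) * Wf τ ε u (t₀, x)
          + ε ^ 2 * η₁ * lap (fun y => u (t₀, y)) x
          - η₂ * deriv (F τ) (u (t₀, x)) := by
      intro x
      rw [hμ t₀ x]
      have hiw : (fun y => ε ^ 2 * lap (fun z => u (t₀, z)) y - deriv (F τ) (u (t₀, y)))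
          = fun y => Wf τ ε u (t₀, y) := by
        funext y
        simp only [Wf, lap_slice hu t₀]
      rw [hiw, lap_slice hu t₀]
      simp only [Wf]
    have hvdef : ∀ x : ℝ × ℝ, Dt u (t₀, x) = M * lap (fun y => μ (t₀, y)) x := by
      intro x
      rw [← (hasDerivAt_tslice hu t₀ x).deriv]
      exact heq t₀ x
    have hid := spatial_identity hL hu₀ hv hw (hup t₀) (SP.Dt hu hup t₀)
      (SP_Wf hu hup t₀) hmdef hvdef
    rw [← hid]
    apply MeasureTheory.setIntegral_congr_fun (measurableSet_Icc.prod measurableSet_Icc)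
    intro x _
    beta_reduce
    simp only [Nf, lap_slice (contDiff_Dt hu) t₀, pd1_slice hu t₀, pd2_slice hu t₀,
      pd1_slice (contDiff_Dt hu) t₀, pd2_slice (contDiff_Dt hu) t₀]
  rw [← hint]
  exact hkey
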